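/- The signed count Σ sgn(a,b,c) for the cyclic word a^3 b^{m−1} c b^{2n−m+2} of length 2n+5 equals −3(2n−2m+3). -/

import Mathlib

/-- The sign of a triple of positions on a cyclic arrangement of `L` points:
`+1` if `i, j, k` occur in this cyclic order, `-1` if `i, k, j` occur in this
cyclic order, and `0` if they are not distinct. -/
def cycSign {L : ℕ} (i j k : Fin L) : ℤ :=
  if (i < j ∧ j < k) ∨ (j < k ∧ k < i) ∨ (k < i ∧ i < j) then 1
  else if (i < k ∧ k < j) ∨ (k < j ∧ j < i) ∨ (j < i ∧ i < k) then -1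
  else 0

/-- The signed count `Σ sgn(a,b,c)` for a cyclic word `w` in the letters
`a = 0`, `b = 1`, `c = 2`: the sum over all choices of one occurrence of each
letter of the sign of the triple of positions. -/
def signedCount {L : ℕ} (w : Fin L → Fin 3) : ℤ :=
  ∑ i : Fin L, ∑ j : Fin L, ∑ k : Fin L,
    if w i = 0 ∧ w j = 1 ∧ w k = 2 then cycSign i j k else 0


/-
With a single `c`, at position `p`, the sum over the occurrences of `c` collapses, and an `a` at
position `i < p` together with a `b` at position `j` is positively oriented exactly when
`i < j < p`. For the word `a^r b^s c b^t` every `a` precedes every `b`, so each of the `r` letters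
`a` contributes `s - t`, and the signed count is `r (s - t)`.
-/

open Finset

theorem cycSign_of_lt_of_lt {L : ℕ} {i j k : Fin L} (hij : i < j) (hik : i < k) (hjk : j ≠ k) :
    cycSign i j k = if j < k then 1 else -1 := by
  rw [Fin.lt_def] at hij hik
  rw [← Fin.val_ne_iff] at hjk
  simp only [cycSign, Fin.lt_def]
  split_ifs <;> omega

theorem signedCount_eq_sum_of_eq_two_iff {L : ℕ} {w : Fin L → Fin 3} {p : Fin L}
    (hp : ∀ k, w k = 2 ↔ k = p) :
    signedCount w = ∑ i, ∑ j, if w i = 0 ∧ w j = 1 then cycSign i j p else 0 := by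
  refine sum_congr rfl fun i _ => sum_congr rfl fun j _ => ?_
  rw [sum_eq_single_of_mem p (mem_univ p) fun k _ hkp => if_neg fun h => hkp ((hp k).1 h.2.2)]
  simp only [(hp p).2 rfl, and_true]

theorem sum_fin_ite_mem_Ico {L a b : ℕ} (hab : a ≤ b) (hbL : b ≤ L) :
    ∑ t : Fin L, (if (t : ℕ) ∈ Ico a b then (1 : ℤ) else 0) = b - a := by
  rw [Fin.sum_univ_eq_sum_range (fun t => if t ∈ Ico a b then (1 : ℤ) else 0), sum_ite_mem,
    inter_eq_right.2 fun t ht => mem_range.2 (by simp only [mem_Ico] at ht; omega)]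
  simp [Nat.cast_sub hab]

/-- The word `a^r b^(p-r) c b^(L-1-p)`. -/
def abcbWord (L r p : ℕ) : Fin L → Fin 3 :=
  fun i => if (i : ℕ) < r then 0 else if (i : ℕ) = p then 2 else 1

section AbcbWord

variable {L r p : ℕ}

theorem abcbWord_eq_zero_iff (i : Fin L) : abcbWord L r p i = 0 ↔ (i : ℕ) < r := by
  unfold abcbWord; split_ifs <;> simp_all

theorem abcbWord_eq_one_iff (j : Fin L) :
    abcbWord L r p j = 1 ↔ r ≤ (j : ℕ) ∧ (j : ℕ) ≠ p := by
  unfold abcbWord; split_ifs <;> simp_all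

theorem abcbWord_eq_two_iff (hrp : r ≤ p) (k : Fin L) :
    abcbWord L r p k = 2 ↔ (k : ℕ) = p := by
  unfold abcbWord; split_ifs <;> simp_all; omega

theorem signedCount_abcbWord (hrp : r ≤ p) (hpL : p < L) :
    signedCount (abcbWord L r p) = r * (((p : ℤ) - r) - (L - (p + 1))) := by
  obtain ⟨c, hc⟩ : ∃ c : Fin L, (c : ℕ) = p := ⟨⟨p, hpL⟩, rfl⟩
  have hsummand : ∀ i j : Fin L,
      (if abcbWord L r p i = 0 ∧ abcbWord L r p j = 1 then cycSign i j c else 0) =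
        (if (i : ℕ) ∈ Ico 0 r then 1 else 0) *
          ((if (j : ℕ) ∈ Ico r p then 1 else 0) -
            (if (j : ℕ) ∈ Ico (p + 1) L then 1 else 0)) := by
    intro i j
    simp only [abcbWord_eq_zero_iff, abcbWord_eq_one_iff, mem_Ico]
    by_cases hij : (i : ℕ) < r ∧ r ≤ (j : ℕ) ∧ (j : ℕ) ≠ p
    · rw [if_pos hij, cycSign_of_lt_of_lt (by omega) (Fin.lt_def.2 (by omega))
        (Fin.val_ne_iff.1 (by omega))]
      simp only [Fin.lt_def]
      split_ifs <;> omega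
    · rw [if_neg hij]
      split_ifs <;> omega
  rw [signedCount_eq_sum_of_eq_two_iff (p := c) fun k =>
    (abcbWord_eq_two_iff hrp k).trans (hc ▸ Fin.ext_iff.symm)]
  simp only [hsummand, ← sum_mul_sum, sum_sub_distrib,
    sum_fin_ite_mem_Ico (Nat.zero_le r) (hrp.trans hpL.le), sum_fin_ite_mem_Ico hrp hpL.le,
    sum_fin_ite_mem_Ico hpL le_rfl]
  push_cast; ring

end AbcbWord

/-- For the cyclic word `a^3 b^{m−1} c b^{2n−m+2}` of length `2n+5` (with
`1 ≤ m ≤ 2n+2`), the signed count `Σ sgn(a,b,c)` equals `−3(2n−2m+3)`. -/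
theorem stmt7 (n m : ℕ) (h1 : 1 ≤ m) (h2 : m ≤ 2 * n + 2) :
    signedCount (fun i : Fin (2 * n + 5) =>
      if (i : ℕ) < 3 then 0
      else if (i : ℕ) < m + 2 then 1
      else if (i : ℕ) = m + 2 then 2
      else 1) = -3 * (2 * (n : ℤ) - 2 * (m : ℤ) + 3) := by
  calc signedCount _ = signedCount (abcbWord (2 * n + 5) 3 (m + 2)) := by
        congr 1
        funext i
        unfold abcbWord
        split_ifs <;> first | rfl | omega
    _ = _ := by
        rw [signedCount_abcbWord (by omega) (by omega)]
        push_cast; ring
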